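/- Let S ≥ 2 and N ≥ 3 be integers and let q = Σ_{k=1}^{N} Σ_{s=1}^{S} C(N,k)·ψ_s(S,k). Then N·S^{N−1} − q > S·(S^{N−2} − 2^{N} + 2) + N·(S−1) + C(N,2), where the inequality is between (possibly negative) integers. -/

import Mathlib

/-- Pair `(g S k, f S k)` defined by the recurrence:
`g(S,1)=1, f(S,1)=0`, and for `k ≥ 2`,
`g(S,k)=(S−1)·f(S,k−1)`, `f(S,k)=(S−2)·f(S,k−1)+g(S,k−1)`. -/
def gfAux (S : ℕ) : ℕ → ℤ × ℤ
  | 0 => (0, 0)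
  | 1 => (1, 0)
  | (k+2) => (((S : ℤ) - 1) * (gfAux S (k+1)).2,
              ((S : ℤ) - 2) * (gfAux S (k+1)).2 + (gfAux S (k+1)).1)

def g (S k : ℕ) : ℤ := (gfAux S k).1
def f (S k : ℕ) : ℤ := (gfAux S k).2

/-- `φ_s(S,k)`: `g(S,k)` if `s = 1`, else `f(S,k)`. -/
def phi (S s k : ℕ) : ℤ := if s = 1 then g S k else f S k

/-- `ψ_s(S,k) = ⌈(k(N−1)/N)·φ_s(S,k)⌉`. -/
def psi (S N s k : ℕ) : ℤ := ⌈((k : ℚ) * ((N : ℚ) - 1) / (N : ℚ)) * ((phi S s k : ℚ))⌉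

/-- `q = Σ_{k=1}^{N} Σ_{s=1}^{S} C(N,k)·ψ_s(S,k)`. -/
def qTotal (S N : ℕ) : ℤ :=
  ∑ k ∈ Finset.Icc 1 N, ∑ s ∈ Finset.Icc 1 S, (N.choose k : ℤ) * psi S N s k

/-!
For an integer `a` and `N > 0` one has `N * ⌈a (N - 1) / N⌉ = (N - 1) a + (a mod N)`.
Since `g(S,k) + (S - 1) f(S,k) = (S - 1)^(k - 1)` and `∑ₖ C(N,k) k (S - 1)^(k - 1) = N S^(N - 1)`,
this gives `N q = (N - 1) N S^(N - 1) + ∑ₖ C(N,k) rₖ` with the rounding loss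
`rₖ = (k g(S,k) mod N) + (S - 1) (k f(S,k) mod N) ≤ S (N - 1)`. For `k = 1, 2, N` the loss is
exactly `1`, `2 (S - 1)` and `0`; bounding all other losses by `S (N - 1)` reduces the claim to
a polynomial inequality in `S`, `N`, `C(N,2)` and `2^N`.
-/
open Finset

lemma g_succ_succ (S k : ℕ) : g S (k + 2) = ((S : ℤ) - 1) * f S (k + 1) := rfl

lemma f_succ_succ (S k : ℕ) : f S (k + 2) = ((S : ℤ) - 2) * f S (k + 1) + g S (k + 1) := rfl

lemma g_add_mul_f (S k : ℕ) : g S (k + 1) + ((S : ℤ) - 1) * f S (k + 1) = ((S : ℤ) - 1) ^ k := by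
  induction k with
  | zero => simp [g, f, gfAux]
  | succ k ih => rw [g_succ_succ, f_succ_succ, pow_succ, ← ih]; ring

lemma sum_Icc_one_choose_mul_mul_pow {R : Type*} [CommSemiring R] (x : R) (n : ℕ) :
    ∑ k ∈ Icc 1 n, (n.choose k : R) * (k * x ^ (k - 1)) = n * (x + 1) ^ (n - 1) := by
  cases n with
  | zero => simp
  | succ n =>
    have hshift : ∀ j ∈ range (n + 1),
        ((n + 1).choose (j + 1) : R) * ((j + 1 : ℕ) * x ^ (j + 1 - 1))
          = (n + 1 : ℕ) * (x ^ j * 1 ^ (n - j) * n.choose j) := by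
      intro j _
      rw [one_pow, mul_one, Nat.add_sub_cancel, ← mul_assoc, ← Nat.cast_mul,
        ← Nat.add_one_mul_choose_eq, Nat.cast_mul]
      ring
    rw [← Ico_add_one_right_eq_Icc, sum_Ico_eq_sum_range, Nat.add_sub_cancel, Nat.add_sub_cancel,
      add_pow, mul_sum]
    simp only [add_comm 1]
    exact sum_congr rfl hshift

lemma sum_Icc_one_choose (n : ℕ) : ∑ k ∈ Icc 1 n, (n.choose k : ℤ) = 2 ^ n - 1 := by
  have h := Nat.sum_range_choose n
  rw [Nat.range_succ_eq_Icc_zero, ← insert_Icc_add_one_left_eq_Icc n.zero_le,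
    sum_insert (by simp), Nat.choose_zero_right, zero_add] at h
  rw [eq_sub_iff_add_eq, add_comm]
  exact_mod_cast h

lemma two_mul_choose_two (n : ℕ) : 2 * (n.choose 2 : ℤ) = n * (n - 1) := by
  have h := Nat.cast_choose_two ℚ n
  field_simp at h
  rw [mul_comm]
  exact_mod_cast h

lemma add_three_le_two_pow {n : ℕ} (hn : 3 ≤ n) : n + 3 ≤ 2 ^ n := by
  induction n, hn using Nat.le_induction with
  | base => norm_num
  | succ n _ ih => rw [pow_succ]; omega

lemma natCast_mul_ceil_mul_sub_one_div (a : ℤ) {N : ℕ} (hN : 0 < N) :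
    (N : ℤ) * ⌈(a : ℚ) * ((N : ℚ) - 1) / N⌉ = (N - 1) * a + a % N := by
  have hsplit : (a : ℚ) * ((N : ℚ) - 1) / N = ((-a : ℤ) : ℚ) / (N : ℕ) + a := by
    push_cast
    field_simp
    ring
  rw [hsplit, Int.ceil_add_intCast, Rat.ceil_intCast_div_natCast, neg_neg]
  linarith [Int.mul_ediv_add_emod a N]

lemma phi_one (S k : ℕ) : phi S 1 k = g S k := if_pos rfl

lemma phi_of_ne_one (S : ℕ) {s : ℕ} (hs : s ≠ 1) (k : ℕ) : phi S s k = f S k := if_neg hs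

lemma natCast_mul_psi (S s k : ℕ) {N : ℕ} (hN : 0 < N) :
    (N : ℤ) * psi S N s k = (N - 1) * (k * phi S s k) + (k * phi S s k) % N := by
  have hrw : (k : ℚ) * ((N : ℚ) - 1) / N * (phi S s k : ℚ)
      = ((k * phi S s k : ℤ) : ℚ) * ((N : ℚ) - 1) / N := by
    push_cast
    ring
  rw [psi, hrw, natCast_mul_ceil_mul_sub_one_div _ hN]

lemma sum_Icc_psi {S : ℕ} (hS : 1 ≤ S) (N k : ℕ) :
    ∑ s ∈ Icc 1 S, psi S N s k = psi S N 1 k + ((S : ℤ) - 1) * psi S N 2 k := by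
  have hconst : ∀ s ∈ Icc 2 S, psi S N s k = psi S N 2 k := by
    intro s hs
    have hs1 : s ≠ 1 := by simp only [mem_Icc] at hs; omega
    rw [psi, psi, phi_of_ne_one S hs1, phi_of_ne_one S (by decide : 2 ≠ 1)]
  rw [← insert_Icc_add_one_left_eq_Icc hS, sum_insert (by simp), one_add_one_eq_two,
    sum_congr rfl hconst, sum_const, Nat.card_Icc, nsmul_eq_mul, Nat.cast_sub (by omega)]
  push_cast
  ring

def roundingLoss (S N k : ℕ) : ℤ := (k * g S k) % N + ((S : ℤ) - 1) * ((k * f S k) % N)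

lemma natCast_mul_sum_Icc_psi {S N k : ℕ} (hS : 1 ≤ S) (hN : 0 < N) (hk : 0 < k) :
    (N : ℤ) * ∑ s ∈ Icc 1 S, psi S N s k
      = (N - 1) * (k * ((S : ℤ) - 1) ^ (k - 1)) + roundingLoss S N k := by
  obtain ⟨j, rfl⟩ : ∃ j, k = j + 1 := ⟨k - 1, by omega⟩
  rw [sum_Icc_psi hS, mul_add, mul_left_comm, natCast_mul_psi _ _ _ hN,
    natCast_mul_psi _ _ _ hN, roundingLoss, Nat.add_sub_cancel, ← g_add_mul_f, phi_one,
    phi_of_ne_one S (by decide : 2 ≠ 1)]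
  ring

lemma natCast_mul_qTotal {S N : ℕ} (hS : 1 ≤ S) (hN : 0 < N) :
    (N : ℤ) * qTotal S N = (N - 1) * (N * (S : ℤ) ^ (N - 1))
      + ∑ k ∈ Icc 1 N, (N.choose k : ℤ) * roundingLoss S N k := by
  have hbinom := sum_Icc_one_choose_mul_mul_pow ((S : ℤ) - 1) N
  rw [sub_add_cancel] at hbinom
  rw [← hbinom, qTotal, mul_sum, mul_sum, ← sum_add_distrib]
  refine sum_congr rfl fun k hk => ?_
  rw [← mul_sum, mul_left_comm, natCast_mul_sum_Icc_psi hS hN (mem_Icc.1 hk).1]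
  ring

lemma roundingLoss_le {S N : ℕ} (hS : 1 ≤ S) (hN : 0 < N) (k : ℕ) :
    roundingLoss S N k ≤ S * ((N : ℤ) - 1) := by
  have hN' : (0 : ℤ) < N := by exact_mod_cast hN
  have hg := Int.emod_lt_of_pos (k * g S k) hN'
  have hf := Int.emod_lt_of_pos (k * f S k) hN'
  have hx : (0 : ℤ) ≤ S - 1 := sub_nonneg.2 (by exact_mod_cast hS)
  unfold roundingLoss
  nlinarith [mul_le_mul_of_nonneg_left (Int.le_sub_one_of_lt hf) hx]

lemma roundingLoss_one (S : ℕ) {N : ℕ} (hN : 2 ≤ N) : roundingLoss S N 1 = 1 := by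
  have : (1 : ℤ) % N = 1 := Int.emod_eq_of_lt zero_le_one (by exact_mod_cast hN)
  simp [roundingLoss, g, f, gfAux, this]

lemma roundingLoss_two (S : ℕ) {N : ℕ} (hN : 3 ≤ N) :
    roundingLoss S N 2 = 2 * ((S : ℤ) - 1) := by
  have : (2 : ℤ) % N = 2 := Int.emod_eq_of_lt zero_le_two (by exact_mod_cast hN)
  simp only [roundingLoss, g, f, gfAux, Nat.cast_ofNat, mul_zero, mul_one, zero_add,
    Int.zero_emod, this]
  ring

lemma roundingLoss_self (S N : ℕ) : roundingLoss S N N = 0 := by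
  simp [roundingLoss, Int.mul_emod_right]

lemma sum_Icc_choose_mul_roundingLoss_le {S N : ℕ} (hS : 1 ≤ S) (hN : 3 ≤ N) :
    ∑ k ∈ Icc 1 N, (N.choose k : ℤ) * roundingLoss S N k
      ≤ S * ((N : ℤ) - 1) * (2 ^ N - 2 - N - N.choose 2) + N
        + 2 * ((S : ℤ) - 1) * N.choose 2 := by
  set slack : ℕ → ℤ := fun k => N.choose k * (S * ((N : ℤ) - 1) - roundingLoss S N k)
  have hslack : slack 1 + slack 2 + slack N ≤ ∑ k ∈ Icc 1 N, slack k := by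
    have hsub : ({1, 2, N} : Finset ℕ) ⊆ Icc 1 N := by
      intro k hk
      simp only [mem_insert, mem_singleton] at hk
      simp only [mem_Icc]
      omega
    have hnonneg : ∀ k ∈ Icc 1 N, k ∉ ({1, 2, N} : Finset ℕ) → 0 ≤ slack k := fun k _ _ =>
      mul_nonneg (Nat.cast_nonneg _) (sub_nonneg.2 (roundingLoss_le hS (by omega) k))
    have hsum := sum_le_sum_of_subset_of_nonneg hsub hnonneg
    rwa [sum_insert (by simp only [mem_insert, mem_singleton]; omega), sum_pair (by omega),
      ← add_assoc] at hsum
  have htotal : ∑ k ∈ Icc 1 N, slack k = S * ((N : ℤ) - 1) * (2 ^ N - 1)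
      - ∑ k ∈ Icc 1 N, (N.choose k : ℤ) * roundingLoss S N k := by
    simp only [slack, mul_sub, sum_sub_distrib, ← sum_mul, sum_Icc_one_choose]
    ring
  simp only [slack, roundingLoss_one S (by omega : 2 ≤ N), roundingLoss_two S hN,
    roundingLoss_self, Nat.choose_one_right, Nat.choose_self] at hslack
  push_cast at hslack
  linarith

/-- The polynomial inequality behind the theorem, for `c = C(N,2)` and `P = 2 ^ N`. -/
lemma choose_two_pow_estimate {S N c P : ℤ} (hS : 2 ≤ S) (hN : 3 ≤ N)
    (hc : 2 * c = N * (N - 1)) (hP : N + 3 ≤ P) :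
    S * (N - 1) * (P - 2 - N - c) + N + 2 * (S - 1) * c
      < N * (S * P - 2 * S - N * (S - 1) - c) := by
  have hc0 : 0 ≤ c := by nlinarith
  have hA : 0 ≤ P - 2 - N + (N - 3) * c := by nlinarith
  nlinarith [mul_nonneg (sub_nonneg.2 hS) hA, mul_nonneg (by linarith : (0 : ℤ) ≤ N - 2) hc0]

theorem q_bound_N_ge_three (S N : ℕ) (hS : 2 ≤ S) (hN : 3 ≤ N) :
    (S : ℤ) * ((S : ℤ) ^ (N - 2) - 2 ^ N + 2) + (N : ℤ) * ((S : ℤ) - 1)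
        + (N.choose 2 : ℤ)
      < (N : ℤ) * (S : ℤ) ^ (N - 1) - qTotal S N := by
  have hq := natCast_mul_qTotal (by omega : 1 ≤ S) (by omega : 0 < N)
  have hloss := sum_Icc_choose_mul_roundingLoss_le (by omega : 1 ≤ S) hN
  have hest := choose_two_pow_estimate (S := S) (c := N.choose 2) (P := 2 ^ N)
    (by exact_mod_cast hS) (by exact_mod_cast hN) (two_mul_choose_two N)
    (by exact_mod_cast add_three_le_two_pow hN)
  have hpow : (S : ℤ) ^ (N - 1) = S * (S : ℤ) ^ (N - 2) := by
    rw [← pow_succ']; congr 1; omega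
  refine lt_of_mul_lt_mul_left ?_ (Nat.cast_nonneg (α := ℤ) N)
  linear_combination hloss + hest + hq - (N : ℤ) * hpow
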